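/- Let A be a finite-dimensional left Leibniz algebra and U a right ideal of A contained in the Frattini subalgebra Φ(A). Then U is nilpotent. -/

import Mathlib

/-!
For `u ∈ U`, left multiplication `L_u` is a derivation (left Leibniz identity). The Fitting
decomposition `A = A₀ ⊕ A₁` of a derivation has a subalgebra as null component `A₀`, while
`A₁ ⊆ range L_u ⊆ U`. If `A₀` were proper it would lie in a maximal subalgebra `M ⊇ U`, forcing
`M = A`; so `A₀ = A` and `L_u` is nilpotent. The identity `[L_a, L_b] = L_{ab}` makes the
`L_u` a Lie algebra of nilpotent operators, and Engel's theorem makes `A`, hence `U`, nilpotent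
under them.
-/

/-- Lower central series of the subalgebra `U`: `U¹ = U`, `U^{k+1} = U·Uᵏ`. -/
def lcsIn {F A : Type*} [Field F] [AddCommGroup A] [Module F A]
    (mul : A →ₗ[F] A →ₗ[F] A) (U : Submodule F A) : ℕ → Submodule F A
  | 0 => U
  | k + 1 => Submodule.span F {x : A | ∃ a ∈ U, ∃ b ∈ lcsIn mul U k, x = mul a b}

/-- `U` is a maximal subalgebra. -/
def IsMaxSubalg {F A : Type*} [Field F] [AddCommGroup A] [Module F A]
    (mul : A →ₗ[F] A →ₗ[F] A) (U : Submodule F A) : Prop :=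
  (∀ u ∈ U, ∀ v ∈ U, mul u v ∈ U) ∧ U ≠ ⊤ ∧
    ∀ V : Submodule F A, (∀ u ∈ V, ∀ v ∈ V, mul u v ∈ V) → U < V → V = ⊤

section LeibnizAlgebra

attribute [local instance] LieRing.ofAssociativeRing

variable {F A : Type*} [Field F] [AddCommGroup A] [Module F A] (mul : A →ₗ[F] A →ₗ[F] A)

theorem exists_isMaxSubalg_le [IsNoetherian F A] {V : Submodule F A}
    (hV : ∀ u ∈ V, ∀ v ∈ V, mul u v ∈ V) (hV_ne_top : V ≠ ⊤) :
    ∃ M : Submodule F A, IsMaxSubalg mul M ∧ V ≤ M := by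
  obtain ⟨M, ⟨hM_subalg, hM_ne_top, hVM⟩, hM_max⟩ := set_has_maximal_iff_noetherian.mpr ‹_›
    {W : Submodule F A | (∀ u ∈ W, ∀ v ∈ W, mul u v ∈ W) ∧ W ≠ ⊤ ∧ V ≤ W}
    ⟨V, hV, hV_ne_top, le_rfl⟩
  refine ⟨M, ⟨hM_subalg, hM_ne_top, fun W hW hMW => ?_⟩, hVM⟩
  by_contra hW_ne_top
  exact hM_max W ⟨hW, hW_ne_top, hVM.trans hMW.le⟩ hMW

variable {mul} {f : Module.End F A}

theorem pow_apply_mul_eq_zero (hf : ∀ a b, f (mul a b) = mul (f a) b + mul a (f b))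
    {p q : ℕ} {a b : A} (ha : (f ^ p) a = 0) (hb : (f ^ q) b = 0) :
    (f ^ (p + q)) (mul a b) = 0 := by
  induction h : p + q generalizing p q a b with
  | zero =>
    obtain rfl : p = 0 := by omega
    simp_all
  | succ n ih =>
    rcases p with _ | p
    · simp_all
    rcases q with _ | q
    · simp_all
    have ha' : (f ^ p) (f a) = 0 := by rwa [← Module.End.mul_apply, ← pow_succ]
    have hb' : (f ^ q) (f b) = 0 := by rwa [← Module.End.mul_apply, ← pow_succ]
    rw [pow_succ, Module.End.mul_apply, hf, map_add, ih ha' hb (by omega),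
      ih ha hb' (by omega), add_zero]

theorem mul_mem_iSup_ker_pow [FiniteDimensional F A]
    (hf : ∀ a b, f (mul a b) = mul (f a) b + mul a (f b)) {a b : A}
    (ha : a ∈ ⨆ n, LinearMap.ker (f ^ n)) (hb : b ∈ ⨆ n, LinearMap.ker (f ^ n)) :
    mul a b ∈ ⨆ n, LinearMap.ker (f ^ n) := by
  have h_le := iSup_le (Module.End.ker_pow_le_ker_pow_finrank f)
  exact Submodule.mem_iSup_of_mem _ (pow_apply_mul_eq_zero hf (h_le ha) (h_le hb))

theorem isNilpotent_of_range_le_isMaxSubalg [FiniteDimensional F A]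
    (hf : ∀ a b, f (mul a b) = mul (f a) b + mul a (f b))
    (h_range : ∀ M, IsMaxSubalg mul M → LinearMap.range f ≤ M) : IsNilpotent f := by
  have h_fitting := LinearMap.isCompl_iSup_ker_pow_iInf_range_pow f
  have h_top : ⨆ n, LinearMap.ker (f ^ n) = ⊤ := by
    by_contra h_ne_top
    obtain ⟨M, hM, h_le⟩ := exists_isMaxSubalg_le mul (fun a ha b hb =>
      mul_mem_iSup_ker_pow hf ha hb) h_ne_top
    have h_range_le : ⨅ n, LinearMap.range (f ^ n) ≤ M :=
      (iInf_le _ 1).trans (by simpa using h_range M hM)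
    exact hM.2.1 (top_le_iff.mp (h_fitting.sup_eq_top ▸ sup_le h_le h_range_le))
  refine ⟨Module.finrank F A, LinearMap.ext fun x => ?_⟩
  exact iSup_le (Module.End.ker_pow_le_ker_pow_finrank f) (h_top ▸ Submodule.mem_top : x ∈ _)

theorem lie_mul_eq_mul_mul
    (leibniz : ∀ a b c : A, mul a (mul b c) = mul (mul a b) c + mul b (mul a c)) (a b : A) :
    ⁅mul a, mul b⁆ = mul (mul a b) := by
  ext c
  rw [Ring.lie_def, LinearMap.sub_apply, Module.End.mul_apply, Module.End.mul_apply, leibniz]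
  abel

def mulLieSubalgebra
    (leibniz : ∀ a b c : A, mul a (mul b c) = mul (mul a b) c + mul b (mul a c))
    (U : Submodule F A) (hU : ∀ u ∈ U, ∀ v ∈ U, mul u v ∈ U) :
    LieSubalgebra F (Module.End F A) where
  toSubmodule := U.map mul
  lie_mem' := by
    rintro _ _ ⟨a, ha, rfl⟩ ⟨b, hb, rfl⟩
    exact ⟨mul a b, hU a ha b hb, (lie_mul_eq_mul_mul leibniz a b).symm⟩

theorem lcsIn_le_lowerCentralSeries
    (leibniz : ∀ a b c : A, mul a (mul b c) = mul (mul a b) c + mul b (mul a c))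
    {U : Submodule F A} (hU : ∀ u ∈ U, ∀ v ∈ U, mul u v ∈ U) (k : ℕ) :
    lcsIn mul U k ≤ (LieModule.lowerCentralSeries F (mulLieSubalgebra leibniz U hU) A k :
      Submodule F A) := by
  induction k with
  | zero => exact le_top
  | succ k ih =>
    refine Submodule.span_le.mpr ?_
    rintro _ ⟨a, ha, b, hb, rfl⟩
    rw [LieModule.lowerCentralSeries_succ]
    exact LieSubmodule.lie_mem_lie (x := ⟨mul a, a, ha, rfl⟩) (LieSubmodule.mem_top _) (ih hb)

theorem exists_lcsIn_eq_bot_of_isNilpotent_mul [FiniteDimensional F A]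
    (leibniz : ∀ a b c : A, mul a (mul b c) = mul (mul a b) c + mul b (mul a c))
    {U : Submodule F A} (hU : ∀ u ∈ U, ∀ v ∈ U, mul u v ∈ U)
    (h_nil : ∀ u ∈ U, IsNilpotent (mul u)) : ∃ k, lcsIn mul U k = ⊥ := by
  have : LieModule.IsNilpotent (mulLieSubalgebra leibniz U hU) A := by
    refine (LieModule.isNilpotent_iff_forall' (R := F)).mpr ?_
    rintro ⟨_, u, hu, rfl⟩
    exact h_nil u hu
  obtain ⟨k, hk⟩ := LieModule.IsNilpotent.nilpotent F (mulLieSubalgebra leibniz U hU) A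
  refine ⟨k, le_bot_iff.mp ?_⟩
  simpa [hk] using lcsIn_le_lowerCentralSeries leibniz hU k

end LeibnizAlgebra

/-- a right ideal contained in the Frattini subalgebra is nilpotent. -/
theorem nilpotent_of_rightIdeal_le_frattini {F A : Type*} [Field F] [AddCommGroup A]
    [Module F A] [FiniteDimensional F A]
    (mul : A →ₗ[F] A →ₗ[F] A)
    (leibniz : ∀ a b c : A, mul a (mul b c) = mul (mul a b) c + mul b (mul a c))
    (U : Submodule F A)
    (hRI : ∀ u ∈ U, ∀ x : A, mul u x ∈ U)
    (hfrat : ∀ M : Submodule F A, IsMaxSubalg mul M → U ≤ M) :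
    ∃ k, lcsIn mul U k = ⊥ := by
  refine exists_lcsIn_eq_bot_of_isNilpotent_mul leibniz (fun u hu v _ => hRI u hu v)
    fun u hu => isNilpotent_of_range_le_isMaxSubalg (leibniz u) fun M hM => ?_
  rintro _ ⟨x, rfl⟩
  exact hfrat M hM (hRI u hu x)
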